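/- For 0 < b < 1, q > 0, j ∈ {0,1}, and w ≥ 0: ∫₀¹ κ^{q+j}(1−κ)^{b−2}(exp(w(1−κ)) − 1) dκ = ((q+j)·B(q+j,b)/(b−1)) · (M(b−1, b+q+j, w) − 1). -/

import Mathlib

/-- Kummer's confluent hypergeometric function `M(a, c, w)`. -/
noncomputable def kummerM (a c w : ℝ) : ℝ :=
  ∑' i : ℕ, ((ascPochhammer ℝ i).eval a / (ascPochhammer ℝ i).eval c) * w ^ i / (Nat.factorial i)

/-- The Beta function as an integral. -/
noncomputable def betaFn (x y : ℝ) : ℝ :=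
  ∫ t in (0:ℝ)..1, t ^ (x - 1) * (1 - t) ^ (y - 1)

/-! Expanding `exp (w (1 - t)) - 1 = ∑ₙ (w (1 - t)) ^ (n + 1) / (n + 1)!` absorbs one power of
`1 - t` into every term, so the non-integrable factor `(1 - t) ^ (b - 2)` becomes
`(1 - t) ^ (b - 1 + n)`; integrating term by term (dominated by
`(exp |w| - 1) t ^ p (1 - t) ^ (b - 1)`) gives `∑ₙ w ^ (n + 1) / (n + 1)! B(p + 1, b + n)`.
Through the Gamma function, `B(p + 1, b + n) = (p B(p, b) / (b - 1)) (b - 1)ₙ₊₁ / (b + p)ₙ₊₁`,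
so the series is that constant times Kummer's series without its constant term `1`. -/

open MeasureTheory Real Set
open scoped Nat

lemma ofReal_rpow_mul_one_sub_rpow {t : ℝ} (ht : t ∈ Icc 0 1) (a c : ℝ) :
    ((t ^ a * (1 - t) ^ c : ℝ) : ℂ) = (t : ℂ) ^ (a : ℂ) * (1 - (t : ℂ)) ^ (c : ℂ) := by
  rw [Complex.ofReal_mul, Complex.ofReal_cpow ht.1, Complex.ofReal_cpow (sub_nonneg.2 ht.2),
    Complex.ofReal_sub, Complex.ofReal_one]

lemma intervalIntegrable_rpow_mul_one_sub_rpow {a c : ℝ} (ha : -1 < a) (hc : -1 < c) :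
    IntervalIntegrable (fun t => t ^ a * (1 - t) ^ c) volume 0 1 := by
  have h := Complex.betaIntegral_convergent (u := ((a + 1 : ℝ) : ℂ)) (v := ((c + 1 : ℝ) : ℂ))
    (by simp; linarith) (by simp; linarith)
  refine h.norm.congr fun t ht => ?_
  rw [uIoc_of_le zero_le_one] at ht
  simp only [Complex.ofReal_add, Complex.ofReal_one, add_sub_cancel_right]
  rw [← ofReal_rpow_mul_one_sub_rpow (Ioc_subset_Icc_self ht), Complex.norm_real,
    norm_of_nonneg (mul_nonneg (rpow_nonneg ht.1.le _) (rpow_nonneg (sub_nonneg.2 ht.2) _))]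

lemma ofReal_betaFn {x y : ℝ} : (betaFn x y : ℂ) = Complex.betaIntegral x y := by
  rw [betaFn, Complex.betaIntegral, ← intervalIntegral.integral_ofReal]
  refine intervalIntegral.integral_congr fun t ht => ?_
  rw [uIcc_of_le zero_le_one] at ht
  simp only [ofReal_rpow_mul_one_sub_rpow ht, Complex.ofReal_sub, Complex.ofReal_one]

theorem betaFn_eq_Gamma_mul_Gamma_div {x y : ℝ} (hx : 0 < x) (hy : 0 < y) :
    betaFn x y = Gamma x * Gamma y / Gamma (x + y) := by
  apply Complex.ofReal_injective
  rw [ofReal_betaFn, Complex.betaIntegral_eq_Gamma_mul_div _ _ (by simpa) (by simpa),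
    ← Complex.ofReal_add, Complex.Gamma_ofReal, Complex.Gamma_ofReal, Complex.Gamma_ofReal]
  norm_cast

theorem ascPochhammer_eval_eq_Gamma_div {a : ℝ} (ha : ∀ k : ℕ, a ≠ -k) (n : ℕ) :
    (ascPochhammer ℝ n).eval a = Gamma (a + n) / Gamma a := by
  rw [eq_div_iff (Gamma_ne_zero ha)]
  induction n with
  | zero => simp
  | succ n ih =>
    have han : a + n ≠ 0 := fun h => ha n (by linarith)
    rw [ascPochhammer_succ_eval, Nat.cast_succ, ← add_assoc, Gamma_add_one han, ← ih]
    ring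

lemma hasSum_pow_succ_div_factorial (x : ℝ) :
    HasSum (fun n : ℕ => x ^ (n + 1) / (n + 1)!) (exp x - 1) := by
  simpa [← exp_eq_exp_ℝ] using (hasSum_nat_add_iff' 1).2 (NormedSpace.expSeries_div_hasSum_exp x)

theorem hasSum_integral_mul_exp_sub_one {p b : ℝ} (hp : -1 < p) (hb : 0 < b) (w : ℝ) :
    HasSum (fun n : ℕ => w ^ (n + 1) / (n + 1)! * betaFn (p + 1) (b + n))
      (∫ t in (0:ℝ)..1, t ^ p * (1 - t) ^ (b - 2) * (exp (w * (1 - t)) - 1)) := by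
  set F : ℕ → ℝ → ℝ := fun n t => w ^ (n + 1) / (n + 1)! * (t ^ p * (1 - t) ^ (b - 1 + n))
  have hF : ∀ n, ∫ t in (0:ℝ)..1, F n t = w ^ (n + 1) / (n + 1)! * betaFn (p + 1) (b + n) := by
    intro n
    rw [intervalIntegral.integral_const_mul, betaFn, add_sub_cancel_right, add_sub_right_comm]
  have h_ae : ∀ᵐ t ∂volume, t ∈ uIoc (0:ℝ) 1 → t ∈ Ioo 0 1 := by
    filter_upwards [Measure.ae_ne volume 1] with t ht1 ht
    rw [uIoc_of_le zero_le_one] at ht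
    exact ⟨ht.1, lt_of_le_of_ne ht.2 ht1⟩
  simp only [← hF]
  refine intervalIntegral.hasSum_integral_of_dominated_convergence
    (fun n t => t ^ p * (1 - t) ^ (b - 1) * (|w| ^ (n + 1) / (n + 1)!))
    (fun n => by fun_prop) ?_ ?_ ?_ ?_
  · intro n
    filter_upwards [h_ae] with t ht hmem
    obtain ⟨ht0, ht1⟩ := ht hmem
    rw [norm_mul, norm_div, norm_pow, RCLike.norm_natCast, Real.norm_eq_abs, Real.norm_eq_abs,
      abs_of_nonneg (by positivity : (0 : ℝ) ≤ t ^ p * (1 - t) ^ (b - 1 + n)), mul_comm]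
    refine mul_le_mul_of_nonneg_right (mul_le_mul_of_nonneg_left ?_ (by positivity)) (by positivity)
    exact rpow_le_rpow_of_exponent_ge (by linarith) (by linarith)
      (le_add_of_nonneg_right n.cast_nonneg)
  · exact ae_of_all _ fun t _ => (hasSum_pow_succ_div_factorial |w|).summable.mul_left _
  · simp only [tsum_mul_left]
    exact (intervalIntegrable_rpow_mul_one_sub_rpow hp (by linarith)).mul_const _
  · filter_upwards [h_ae] with t ht hmem
    have hs : 0 < 1 - t := sub_pos.2 (ht hmem).2
    refine ((hasSum_pow_succ_div_factorial (w * (1 - t))).mul_left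
      (t ^ p * (1 - t) ^ (b - 2))).congr_fun fun n => ?_
    simp only [F]
    rw [show b - 1 + (n : ℝ) = b - 2 + (n + 1 : ℕ) by push_cast; ring, rpow_add hs, rpow_natCast,
      mul_pow]
    ring

noncomputable def kummerTerm (a c w : ℝ) (i : ℕ) : ℝ :=
  ((ascPochhammer ℝ i).eval a / (ascPochhammer ℝ i).eval c) * w ^ i / (Nat.factorial i)

lemma kummerM_eq_tsum_kummerTerm (a c w : ℝ) : kummerM a c w = ∑' i, kummerTerm a c w i := rfl

@[simp]
lemma kummerTerm_zero (a c w : ℝ) : kummerTerm a c w 0 = 1 := by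
  simp [kummerTerm]

theorem pow_succ_div_factorial_mul_betaFn_eq_mul_kummerTerm {p b : ℝ} (hp : 0 < p) (hb : 0 < b)
    (hb1 : b ≠ 1) (w : ℝ) (n : ℕ) :
    w ^ (n + 1) / (n + 1)! * betaFn (p + 1) (b + n)
      = p * betaFn p b / (b - 1) * kummerTerm (b - 1) (b + p) w (n + 1) := by
  have hb1' : b - 1 ≠ 0 := sub_ne_zero.2 hb1
  have ha : ∀ k : ℕ, b - 1 ≠ -k := by
    rintro (_ | k) h
    · simp_all
    · push_cast at h; linarith [k.cast_nonneg (α := ℝ)]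
  have hc : ∀ k : ℕ, b + p ≠ -k := fun k h => by linarith [k.cast_nonneg (α := ℝ)]
  have hΓb : Gamma b = (b - 1) * Gamma (b - 1) := by
    simpa using Gamma_add_one hb1'
  rw [kummerTerm, ascPochhammer_eval_eq_Gamma_div ha, ascPochhammer_eval_eq_Gamma_div hc,
    betaFn_eq_Gamma_mul_Gamma_div (by linarith) (by positivity), betaFn_eq_Gamma_mul_Gamma_div hp hb,
    Gamma_add_one hp.ne', hΓb, show b - 1 + ((n + 1 : ℕ) : ℝ) = b + n by push_cast; ring,
    show b + p + ((n + 1 : ℕ) : ℝ) = p + 1 + (b + n) by push_cast; ring, add_comm p b]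
  field_simp [Gamma_ne_zero ha]

theorem integral_rpow_mul_exp_sub_one_eq_kummerM {p b : ℝ} (hp : 0 < p) (hb : 0 < b)
    (hb1 : b ≠ 1) (w : ℝ) :
    ∫ t in (0:ℝ)..1, t ^ p * (1 - t) ^ (b - 2) * (exp (w * (1 - t)) - 1)
      = p * betaFn p b / (b - 1) * (kummerM (b - 1) (b + p) w - 1) := by
  set C := p * betaFn p b / (b - 1)
  set I := ∫ t in (0:ℝ)..1, t ^ p * (1 - t) ^ (b - 2) * (exp (w * (1 - t)) - 1)
  have hC : C ≠ 0 := by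
    have : 0 < betaFn p b := by rw [betaFn_eq_Gamma_mul_Gamma_div hp hb]; positivity
    exact div_ne_zero (by positivity) (sub_ne_zero.2 hb1)
  have hsum : HasSum (fun n => C * kummerTerm (b - 1) (b + p) w (n + 1)) (C * (I / C)) := by
    rw [mul_div_cancel₀ I hC]
    simpa only [pow_succ_div_factorial_mul_betaFn_eq_mul_kummerTerm hp hb hb1] using
      hasSum_integral_mul_exp_sub_one (neg_one_lt_zero.trans hp) hb w
  have hkummer : HasSum (kummerTerm (b - 1) (b + p) w) (I / C + 1) := by
    simpa using (hasSum_nat_add_iff 1).1 ((hasSum_mul_left_iff hC).1 hsum)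
  rw [kummerM_eq_tsum_kummerTerm, hkummer.tsum_eq, add_sub_cancel_right, mul_div_cancel₀ I hC]

theorem integral_b_minus_two_general (b q j w : ℝ) (hb0 : 0 < b) (hb1 : b < 1)
    (hq : 0 < q) (hj : j = 0 ∨ j = 1) :
    ∫ κ in (0:ℝ)..1, κ ^ (q + j) * (1 - κ) ^ (b - 2) * (Real.exp (w * (1 - κ)) - 1)
      = ((q + j) * betaFn (q + j) b / (b - 1)) * (kummerM (b - 1) (b + q + j) w - 1) := by
  have hj0 : 0 ≤ j := by rcases hj with rfl | rfl <;> norm_num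
  rw [add_assoc b q j]
  exact integral_rpow_mul_exp_sub_one_eq_kummerM (by linarith) hb0 hb1.ne w

theorem integral_b_minus_two (b q j w : ℝ) (hb0 : 0 < b) (hb1 : b < 1)
    (hq : 0 < q) (hj : j = 0 ∨ j = 1) (hw : 0 ≤ w) :
    ∫ κ in (0:ℝ)..1, κ ^ (q + j) * (1 - κ) ^ (b - 2) * (Real.exp (w * (1 - κ)) - 1)
      = ((q + j) * betaFn (q + j) b / (b - 1)) * (kummerM (b - 1) (b + q + j) w - 1) :=
  integral_b_minus_two_general b q j w hb0 hb1 hq hj
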